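/- arXiv:1002.1559 — 3 statements merged into one kernel-verified Lean document; each statement's English description precedes it below -/
import Mathlib

section
/- With s_n defined by s_0 = 1 and s_n = (s_{n-1})^{2^{k_n - k_{n-1}}} · 0^{2^{k_n - (n+1)}} for a strictly increasing sequence (k_n) with k_0 = 1 and k_n ≥ n+1, define f(n) = ∑_{i=1}^n 2^{k_i - (i+1)}. Then for every n ≥ 1: the string s_n ends with the block 1·0^{f(n)}, s_n begins with the symbol 1, and the pattern 1·0^{f(n)}·1 does not occur as a substring of s_n. -/
/-!
Induction on `n`, with the invariant: `s n` starts with `1`, ends with `1·0^(f n)`, and every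
run of zeros between two `1`s is shorter than `f n`. Gluing copies of `s n` creates new runs
between two `1`s of length exactly `f n` (the tail of one copy meets the leading `1` of the next),
and appending `2^(k (n+1) - (n+2)) ≥ 1` zeros makes the final run of length `f (n+1)` strictly
longer than all of them.
-/

abbrev gapWord (j : ℕ) : List Bool := true :: (List.replicate j false ++ [true])

theorem List.IsInfix.of_append_of_getLast?_notMem {α : Type*} {l w z : List α} {b : α}
    (h : l <:+: w ++ z) (hl : l.getLast? = some b) (hz : b ∉ z) : l <:+: w := by
  rcases List.infix_append_iff_ne_nil.1 h with h | h | ⟨l₁, l₂, -, hl₂, rfl, -, hpre⟩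
  · exact h
  · exact absurd (h.subset (List.mem_of_getLast? hl)) hz
  · rw [List.getLast?_append_of_ne_nil _ hl₂] at hl
    exact absurd (hpre.subset (List.mem_of_getLast? hl)) hz

theorem gapWord_infix_of_infix_append_replicate {w : List Bool} {j a : ℕ}
    (h : gapWord j <:+: w ++ List.replicate a false) : gapWord j <:+: w :=
  h.of_append_of_getLast?_notMem (b := true)
    (by rw [gapWord, ← List.cons_append, List.getLast?_concat]) (by simp [List.mem_replicate])

theorem eq_of_append_cons_true_eq_gapWord {l t : List Bool} {j : ℕ}
    (h : l ++ true :: t = gapWord j) (hl : l ≠ []) : l = true :: List.replicate j false := by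
  obtain ⟨a, l', rfl⟩ := List.exists_cons_of_ne_nil hl
  simp only [gapWord, List.cons_append, List.cons.injEq] at h
  obtain ⟨rfl, h⟩ := h
  rcases List.eq_nil_or_concat' t with rfl | ⟨t', b, rfl⟩
  · rw [List.append_cancel_right h]
  · have h' : (l' ++ true :: t') ++ [b] = List.replicate j false ++ [true] := by simpa using h
    have : true ∈ List.replicate j false := by
      rw [← (List.append_inj' h' rfl).1]
      simp
    simp [List.mem_replicate] at this

theorem le_of_cons_replicate_suffix {x : List Bool} {j F : ℕ}
    (h : true :: List.replicate j false <:+ x ++ true :: List.replicate F false) : j ≤ F := by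
  by_contra! hFj
  have hsuf : true :: List.replicate F false <:+ List.replicate j false := by
    have := List.suffix_of_suffix_length_le (List.suffix_append x _) h (by simpa using hFj.le)
    rcases List.suffix_cons_iff.1 this with heq | hsuf
    · simp [List.replicate_inj] at heq
      omega
    · exact hsuf
  simpa [List.mem_replicate] using hsuf.subset (List.mem_cons_self ..)

structure IsLongestFinalGap (F : ℕ) (c : List Bool) : Prop where
  startsWith_true : ∃ y, c = true :: y
  endsWith_gap : ∃ x, c = x ++ true :: List.replicate F false
  not_gapWord_infix : ∀ j, F ≤ j → ¬ gapWord j <:+: c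

namespace IsLongestFinalGap

variable {F : ℕ} {c : List Bool}

theorem singleton_true : IsLongestFinalGap 0 [true] where
  startsWith_true := ⟨[], rfl⟩
  endsWith_gap := ⟨[], rfl⟩
  not_gapWord_infix j _ h := by simpa using h.length_le

-- Where two copies of `c` meet, the run of zeros between two `1`s has length exactly `F`.
theorem not_gapWord_infix_flatten_replicate (hc : IsLongestFinalGap F c) {j : ℕ} (hj : F < j) :
    ∀ m, ¬ gapWord j <:+: (List.replicate m c).flatten
  | 0 => by simp [List.IsInfix]
  | m + 1 => by
    rw [List.replicate_succ, List.flatten_cons]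
    intro h
    rcases List.infix_append_iff_ne_nil.1 h with h | h | ⟨l₁, l₂, hl₁, hl₂, hw, hsuf, hpre⟩
    · exact hc.not_gapWord_infix j hj.le h
    · exact not_gapWord_infix_flatten_replicate hc hj m h
    · obtain ⟨y, hy⟩ := hc.startsWith_true
      obtain ⟨t, rfl⟩ : ∃ t, l₂ = true :: t := by
        cases m with
        | zero => simp_all
        | succ m =>
          rw [List.replicate_succ, List.flatten_cons, hy, List.cons_append] at hpre
          obtain ⟨t, rfl, -⟩ := (List.prefix_cons_iff.1 hpre).resolve_left hl₂
          exact ⟨t, rfl⟩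
      obtain ⟨x, hx⟩ := hc.endsWith_gap
      rw [eq_of_append_cons_true_eq_gapWord hw.symm hl₁, hx] at hsuf
      exact absurd (le_of_cons_replicate_suffix hsuf) hj.not_ge

theorem flatten_replicate_append (hc : IsLongestFinalGap F c) {m a : ℕ} (hm : 1 ≤ m)
    (ha : 1 ≤ a) :
    IsLongestFinalGap (F + a) ((List.replicate m c).flatten ++ List.replicate a false) := by
  obtain ⟨m, rfl⟩ := Nat.exists_eq_add_of_le' hm
  obtain ⟨y, hy⟩ := hc.startsWith_true
  obtain ⟨x, hx⟩ := hc.endsWith_gap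
  refine ⟨⟨y ++ (List.replicate m c).flatten ++ List.replicate a false, ?_⟩,
    ⟨(List.replicate m c).flatten ++ x, ?_⟩, fun j hj h => ?_⟩
  · rw [List.replicate_succ, List.flatten_cons, hy]
    simp
  · rw [List.replicate_succ', List.flatten_append, List.flatten_singleton, List.replicate_add]
    nth_rw 2 [hx]
    simp
  · exact hc.not_gapWord_infix_flatten_replicate (by omega) _
      (gapWord_infix_of_infix_append_replicate h)

end IsLongestFinalGap

theorem names_end_start_no_pattern_general (k : ℕ → ℕ)
    (s : ℕ → List Bool) (hs0 : s 0 = [true])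
    (hsrec : ∀ n : ℕ, 1 ≤ n →
      s n = (List.replicate (2 ^ (k n - k (n - 1))) (s (n - 1))).flatten
              ++ List.replicate (2 ^ (k n - (n + 1))) false)
    (f : ℕ → ℕ) (hf : ∀ n, f n = ∑ i ∈ Finset.Icc 1 n, 2 ^ (k i - (i + 1))) :
    ∀ n : ℕ, 1 ≤ n →
      (∃ u : List Bool, s n = u ++ (true :: List.replicate (f n) false)) ∧
      (∃ v : List Bool, s n = true :: v) ∧
      ¬ (true :: (List.replicate (f n) false ++ [true])) <:+: s n := by
  have key : ∀ n, IsLongestFinalGap (f n) (s n) := by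
    intro n
    induction n with
    | zero => simpa [hs0, hf] using IsLongestFinalGap.singleton_true
    | succ n ih =>
      rw [hsrec (n + 1) n.succ_pos, hf, Finset.sum_Icc_succ_top n.succ_pos, ← hf]
      exact ih.flatten_replicate_append Nat.one_le_two_pow Nat.one_le_two_pow
  intro n _
  exact ⟨(key n).endsWith_gap, (key n).startsWith_true, (key n).not_gapWord_infix _ le_rfl⟩

/-- with `s n` the symbolic names and `f n = ∑_{i=1}^n 2^{k_i-(i+1)}`,
for every `n ≥ 1`: `s n` ends with the block `1·0^{f n}`, `s n` begins with `1`,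
and the pattern `1·0^{f n}·1` does not occur as a substring of `s n`. -/
theorem names_end_start_no_pattern (k : ℕ → ℕ) (hk : StrictMono k) (hk0 : k 0 = 1)
    (hkn : ∀ n : ℕ, n + 1 ≤ k n)
    (s : ℕ → List Bool) (hs0 : s 0 = [true])
    (hsrec : ∀ n : ℕ, 1 ≤ n →
      s n = (List.replicate (2 ^ (k n - k (n - 1))) (s (n - 1))).flatten
              ++ List.replicate (2 ^ (k n - (n + 1))) false)
    (f : ℕ → ℕ) (hf : ∀ n, f n = ∑ i ∈ Finset.Icc 1 n, 2 ^ (k i - (i + 1))) :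
    ∀ n : ℕ, 1 ≤ n →
      (∃ u : List Bool, s n = u ++ (true :: List.replicate (f n) false)) ∧
      (∃ v : List Bool, s n = true :: v) ∧
      ¬ (true :: (List.replicate (f n) false ++ [true])) <:+: s n :=
  names_end_start_no_pattern_general k s hs0 hsrec f hf
end

section
/- With s_n as above (s_0 = 1, s_n = (s_{n-1})^{2^{k_n-k_{n-1}}} · 0^{2^{k_n-(n+1)}}, (k_n) strictly increasing, k_0=1, k_n - k_{n-1} ≥ 1), define B(x) = { m : the pattern 1·0^m·1 occurs as a substring of x } (with 1·0^0·1 = 11). Then B(s_n) = { f(i) : 0 ≤ i ≤ n-1 } for all n ≥ 1, where f(0) = 0 and f(i) = ∑_{j=1}^i 2^{k_j - (j+1)}. -/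
/-!
Appending zeros creates no new gap, and in a product `u v` where `v` starts with `1` and `u` ends
with `1 0^g` the only new gap is `g`, at the seam. By induction `s n` starts with `1` and ends with
`1 0^(f n)` (the trailing zeros accumulate: `f (n+1) = f n + 2^(k (n+1) - (n+2))`), and `s (n+1)`
contains at least two copies of `s n`, so `gapLengths (s (n+1)) = gapLengths (s n) ∪ {f n}`,
starting from `gapLengths [true] = ∅`.
-/

def gapPattern (m : ℕ) : List Bool := true :: (List.replicate m false ++ [true])

def gapLengths (x : List Bool) : Set ℕ := {m | gapPattern m <:+: x}

theorem eq_of_cons_true_replicate_false_suffix {l : List Bool} {m g : ℕ}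
    (hm : true :: List.replicate m false <:+ l) (hg : true :: List.replicate g false <:+ l) :
    m = g := by
  have not_suffix : ∀ a b, ¬ true :: List.replicate a false <:+ List.replicate b false :=
    fun a b h => by simpa using h.subset List.mem_cons_self
  rcases List.suffix_or_suffix_of_suffix hm hg with h | h <;>
    rcases List.suffix_cons_iff.mp h with h | h
  · simpa using h
  · exact absurd h (not_suffix _ _)
  · simpa using h.symm
  · exact absurd h (not_suffix _ _)

theorem true_mem_of_suffix_gapPattern {l : List Bool} {m : ℕ} (h : l <:+ gapPattern m)
    (hl : l ≠ []) : true ∈ l := by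
  have : l.getLast hl = true := by simp [h.getLast hl, gapPattern]
  exact this ▸ List.getLast_mem hl

theorem eq_of_gapPattern_eq_append_cons_true {l r : List Bool} {m : ℕ} (hl : l ≠ [])
    (h : gapPattern m = l ++ true :: r) : l = true :: List.replicate m false := by
  obtain ⟨a, d, rfl⟩ := List.exists_cons_of_ne_nil hl
  simp only [gapPattern, List.cons_append, List.cons.injEq] at h
  obtain ⟨rfl, h⟩ := h
  rcases List.append_eq_append_iff.mp h with ⟨a', rfl, h'⟩ | ⟨c, h', h''⟩
  · cases a' <;> simp_all
  · cases c with
    | nil => simp_all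
    | cons x c =>
      obtain ⟨rfl, -⟩ := List.cons_eq_cons.mp h''
      simpa using congrArg (true ∈ ·) h'

theorem gapLengths_append_replicate_false (u : List Bool) (z : ℕ) :
    gapLengths (u ++ List.replicate z false) = gapLengths u := by
  ext m
  refine ⟨fun h => ?_, List.infix_append_of_infix_left⟩
  rcases List.infix_append_iff_ne_nil.mp h with h | h | ⟨l₁, l₂, -, hl₂, hp, -, hpre⟩
  · exact h
  · simpa [gapPattern] using h.subset List.mem_cons_self
  · simpa using hpre.subset (true_mem_of_suffix_gapPattern ⟨l₁, hp.symm⟩ hl₂)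

theorem gapLengths_append {u v : List Bool} {g : ℕ}
    (hu : true :: List.replicate g false <:+ u) (hv : [true] <+: v) :
    gapLengths (u ++ v) = insert g (gapLengths u ∪ gapLengths v) := by
  ext m
  simp only [gapLengths, Set.mem_ofPred_eq, Set.mem_insert_iff, Set.mem_union]
  constructor
  · intro h
    rcases List.infix_append_iff_ne_nil.mp h with
      h | h | ⟨l₁, l₂, hl₁, hl₂, hp, hsuf, hpre⟩
    · exact Or.inr (Or.inl h)
    · exact Or.inr (Or.inr h)
    · left
      obtain ⟨r, rfl⟩ : ∃ r, l₂ = true :: r := by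
        have hhead : l₂.head hl₂ = true := (hpre.head hl₂).trans (hv.head (by simp)).symm
        exact ⟨l₂.tail, by rw [← hhead, List.cons_head_tail]⟩
      rw [eq_of_gapPattern_eq_append_cons_true hl₁ hp] at hsuf
      exact eq_of_cons_true_replicate_false_suffix hsuf hu
  · rintro (rfl | h | h)
    · exact List.infix_append_iff.mpr (Or.inr (Or.inr ⟨_, _, rfl, hu, hv⟩))
    · exact List.infix_append_of_infix_left h
    · exact List.infix_append_of_infix_right h

theorem List.prefix_flatten_replicate {α : Type*} {c : ℕ} (hc : c ≠ 0) (w : List α) :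
    w <+: (List.replicate c w).flatten := by
  obtain ⟨c, rfl⟩ := Nat.exists_eq_succ_of_ne_zero hc
  simp [List.replicate_succ]

theorem List.suffix_flatten_replicate {α : Type*} {c : ℕ} (hc : c ≠ 0) (w : List α) :
    w <:+ (List.replicate c w).flatten := by
  obtain ⟨c, rfl⟩ := Nat.exists_eq_succ_of_ne_zero hc
  simp [List.replicate_succ']

theorem gapLengths_flatten_replicate {w : List Bool} {c g : ℕ} (hc : 2 ≤ c)
    (hw₁ : [true] <+: w) (hw₂ : true :: List.replicate g false <:+ w) :
    gapLengths (List.replicate c w).flatten = insert g (gapLengths w) := by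
  induction c, hc using Nat.le_induction with
  | base => simp [List.replicate_succ, gapLengths_append hw₂ hw₁]
  | succ c hc ih =>
    rw [List.replicate_succ, List.flatten_cons,
      gapLengths_append hw₂ (hw₁.trans (List.prefix_flatten_replicate (by omega) w)), ih]
    simp

theorem gapLengths_singleton_true : gapLengths [true] = ∅ := by
  ext m
  simpa [gapLengths, gapPattern] using fun h => by simpa using h.length_le

section Recursion

variable {s : ℕ → List Bool} {c z f : ℕ → ℕ}

theorem singleton_true_prefix_of_rec (hs0 : s 0 = [true])
    (hrec : ∀ n, s (n + 1) = (List.replicate (c n) (s n)).flatten ++ List.replicate (z n) false)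
    (hc : ∀ n, c n ≠ 0) (n : ℕ) : [true] <+: s n := by
  induction n with
  | zero => rw [hs0]
  | succ n ih =>
    rw [hrec]
    exact (ih.trans (List.prefix_flatten_replicate (hc n) _)).trans (List.prefix_append _ _)

theorem cons_true_replicate_false_suffix_of_rec (hs0 : s 0 = [true])
    (hrec : ∀ n, s (n + 1) = (List.replicate (c n) (s n)).flatten ++ List.replicate (z n) false)
    (hc : ∀ n, c n ≠ 0) (hf0 : f 0 = 0) (hf : ∀ n, f (n + 1) = f n + z n) (n : ℕ) :
    true :: List.replicate (f n) false <:+ s n := by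
  induction n with
  | zero => simp [hs0, hf0]
  | succ n ih =>
    rw [hrec, hf, List.replicate_add, ← List.cons_append, List.suffix_append_self_iff]
    exact ih.trans (List.suffix_flatten_replicate (hc n) _)

theorem gapLengths_eq_image_of_rec (hs0 : s 0 = [true])
    (hrec : ∀ n, s (n + 1) = (List.replicate (c n) (s n)).flatten ++ List.replicate (z n) false)
    (hc : ∀ n, 2 ≤ c n) (hf0 : f 0 = 0) (hf : ∀ n, f (n + 1) = f n + z n) (n : ℕ) :
    gapLengths (s n) = f '' Set.Iio n := by
  have hc₀ (n : ℕ) : c n ≠ 0 := Nat.ne_zero_of_lt (hc n)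
  induction n with
  | zero => simp [hs0, gapLengths_singleton_true]
  | succ n ih =>
    rw [hrec, gapLengths_append_replicate_false,
      gapLengths_flatten_replicate (hc n) (singleton_true_prefix_of_rec hs0 hrec hc₀ n)
        (cons_true_replicate_false_suffix_of_rec hs0 hrec hc₀ hf0 hf n),
      ih, ← Set.image_insert_eq, ← Order.Iio_succ_eq_insert, Order.succ_eq_add_one]

end Recursion

theorem gap_lengths_of_names_general (k : ℕ → ℕ)
    (hgap : ∀ n : ℕ, 1 ≤ n → 1 ≤ k n - k (n - 1))
    (s : ℕ → List Bool) (hs0 : s 0 = [true])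
    (hsrec : ∀ n : ℕ, 1 ≤ n →
      s n = (List.replicate (2 ^ (k n - k (n - 1))) (s (n - 1))).flatten
              ++ List.replicate (2 ^ (k n - (n + 1))) false)
    (f : ℕ → ℕ) (hf : ∀ n, f n = ∑ j ∈ Finset.Icc 1 n, 2 ^ (k j - (j + 1))) :
    ∀ n : ℕ, 1 ≤ n →
      {m : ℕ | (true :: (List.replicate m false ++ [true])) <:+: s n}
        = {m : ℕ | ∃ i : ℕ, i ≤ n - 1 ∧ m = f i} := by
  have hrec (n : ℕ) : s (n + 1) = (List.replicate (2 ^ (k (n + 1) - k n)) (s n)).flatten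
      ++ List.replicate (2 ^ (k (n + 1) - (n + 2))) false := by
    simpa using hsrec (n + 1) n.succ_pos
  have hc (n : ℕ) : 2 ≤ 2 ^ (k (n + 1) - k n) := by
    simpa using Nat.pow_le_pow_right two_pos (hgap (n + 1) n.succ_pos)
  have hf_succ (n : ℕ) : f (n + 1) = f n + 2 ^ (k (n + 1) - (n + 2)) := by
    rw [hf, hf, Finset.sum_Icc_succ_top (by omega)]
  intro n hn
  obtain ⟨n, rfl⟩ := Nat.exists_eq_add_of_le' hn
  refine (gapLengths_eq_image_of_rec hs0 hrec hc (by simp [hf]) hf_succ (n + 1)).trans ?_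
  ext
  simp [eq_comm]

/-- with `B(x) = {m | the pattern 1·0^m·1 occurs as a substring of x}`,
for every `n ≥ 1` we have `B(s n) = {f i | 0 ≤ i ≤ n-1}`, where `f 0 = 0` and
`f i = ∑_{j=1}^i 2^{k_j-(j+1)}`. -/
theorem gap_lengths_of_names (k : ℕ → ℕ) (hk : StrictMono k) (hk0 : k 0 = 1)
    (hgap : ∀ n : ℕ, 1 ≤ n → 1 ≤ k n - k (n - 1))
    (s : ℕ → List Bool) (hs0 : s 0 = [true])
    (hsrec : ∀ n : ℕ, 1 ≤ n →
      s n = (List.replicate (2 ^ (k n - k (n - 1))) (s (n - 1))).flatten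
              ++ List.replicate (2 ^ (k n - (n + 1))) false)
    (f : ℕ → ℕ) (hf : ∀ n, f n = ∑ j ∈ Finset.Icc 1 n, 2 ^ (k j - (j + 1))) :
    ∀ n : ℕ, 1 ≤ n →
      {m : ℕ | (true :: (List.replicate m false ++ [true])) <:+: s n}
        = {m : ℕ | ∃ i : ℕ, i ≤ n - 1 ∧ m = f i} :=
  gap_lengths_of_names_general k hgap s hs0 hsrec f hf
end

section
/- Let (C_n) be an extending sequence of columns on [0,1] with w(C_n) → 0 and λ(⋃_n S(C_n)) = 1, and let T be the invertible measure-preserving transformation defined (a.e.) by the limit of the partial transformations of the C_n. Then T is ergodic: every measurable set A with T(A) = A has λ(A) ∈ {0, 1}. -/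
/-!
Let `A` be a `T`-invariant set. As `T` translates each level of `C n` onto the next one, `A` meets
all levels of `C n` in sets of equal measure. By Lebesgue's density theorem, almost every point of
`A`, and almost every point of `[0, 1] \ A`, is a density point; as the widths tend to `0` and the
supports exhaust `[0, 1]`, for large `n` some level of `C n` is more than half filled by `A` and
another less than half, unless `A` or its complement is null.
-/

open MeasureTheory ENNReal

/-- A column: an ordered tuple of `h` half-open intervals of common width `w`,
with left endpoints `a i`; level `i` is `(a i, a i + w]`. -/
structure Column where
  h : ℕ
  w : ℝ
  a : Fin h → ℝ

namespace Column

/-- Level `i` of the column. -/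
def level (C : Column) (i : Fin C.h) : Set ℝ := Set.Ioc (C.a i) (C.a i + C.w)

/-- The support of a column: the union of its levels. -/
def support (C : Column) : Set ℝ := ⋃ i, C.level i

/-- Concatenation `C * C'` of two columns (of equal width): stack `C'` on top of `C`. -/
def concat (C C' : Column) : Column := ⟨C.h + C'.h, C.w, Fin.append C.a C'.a⟩

/-- One step of cutting and stacking: `C * C = C_L * C_R`, cutting each level in half. -/
noncomputable def cutStack (C : Column) : Column :=
  ⟨C.h + C.h, C.w / 2, Fin.append C.a (fun i => C.a i + C.w / 2)⟩

/-- `C.iter k` is `C(k)`: `k` iterations of cutting and stacking. -/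
noncomputable def iter (C : Column) : ℕ → Column
  | 0 => C
  | n + 1 => (C.iter n).cutStack

/-- The levels of a column are pairwise disjoint. -/
def LevelsDisjoint (C : Column) : Prop :=
  ∀ i j : Fin C.h, i ≠ j → Disjoint (C.level i) (C.level j)

end Column

/-- The initial column `C_0`, the single interval `X^1 = (1/2, 1]`. -/
noncomputable def baseCol : Column := ⟨1, 1 / 2, fun _ => 1 / 2⟩

/-- The column of height one given by `A_n = (2^{-(n+1)}, 2^{-n}]`. -/
noncomputable def colA (n : ℕ) : Column := ⟨1, (2 : ℝ) ^ (-(n + 1 : ℤ)), fun _ => (2 : ℝ) ^ (-(n + 1 : ℤ))⟩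

/-- The columns `C_n = C_{n-1}(k_n - k_{n-1}) * A_n(k_n - (n+1))` of the Theorem 2
construction. -/
noncomputable def cols (k : ℕ → ℕ) : ℕ → Column
  | 0 => baseCol
  | n + 1 => ((cols k n).iter (k (n + 1) - k n)).concat ((colA (n + 1)).iter (k (n + 1) - (n + 2)))

open Filter Set Metric Topology

theorem ae_eventually_volume_closedBall_diff_lt {s : Set ℝ} (hs : MeasurableSet s)
    {ε : ℝ≥0∞} (hε : ε ≠ 0) :
    ∀ᵐ x, x ∈ s → ∀ᶠ r in 𝓝[>] 0, volume (closedBall x r \ s) < ε * volume (closedBall x r) := by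
  filter_upwards [Besicovitch.ae_tendsto_measure_inter_div_of_measurableSet volume hs.compl]
    with x hx hxs
  rw [indicator_of_notMem (notMem_compl_iff.2 hxs)] at hx
  filter_upwards [hx.eventually (gt_mem_nhds (pos_iff_ne_zero.2 hε)), self_mem_nhdsWithin]
    with r hr (hr0 : 0 < r)
  have hball : volume (closedBall x r) ≠ 0 := by
    rw [Real.volume_closedBall]; simpa using hr0
  rwa [sdiff_eq_compl_inter,
    ← ENNReal.div_lt_iff (Or.inl hball) (Or.inl measure_closedBall_lt_top.ne)]

namespace Column

theorem volume_level (C : Column) (i : Fin C.h) : volume (C.level i) = ENNReal.ofReal C.w := by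
  simp [level, Real.volume_Ioc]

theorem measurableSet_support (C : Column) : MeasurableSet C.support :=
  .iUnion fun _ => measurableSet_Ioc

theorem level_subset_closedBall {C : Column} {i : Fin C.h} {x : ℝ} (hx : x ∈ C.level i) :
    C.level i ⊆ closedBall x C.w := fun y hy => by
  simp only [level, mem_Ioc] at hx hy
  rw [mem_closedBall, Real.dist_eq, abs_le]
  constructor <;> linarith

/-- `T` extends the partial map of `C`, which translates each level onto the next one. -/
def ExtendedBy (C : Column) (T : ℝ → ℝ) : Prop :=
  ∀ (i : ℕ) (hi : i + 1 < C.h), ∀ x ∈ C.level ⟨i, by omega⟩,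
    T x = x - C.a ⟨i, by omega⟩ + C.a ⟨i + 1, hi⟩

theorem ExtendedBy.iterate_apply {C : Column} {T : ℝ → ℝ} (hC : C.ExtendedBy T) (i : ℕ) :
    ∀ (k : ℕ) (hik : i + k < C.h), ∀ x ∈ C.level ⟨i, by omega⟩,
      T^[k] x = x - C.a ⟨i, by omega⟩ + C.a ⟨i + k, hik⟩
  | 0, _, x, _ => by simp
  | k + 1, hik, x, hx => by
    have hk := hC.iterate_apply i k (by omega) x hx
    have hmem : T^[k] x ∈ C.level ⟨i + k, by omega⟩ := by
      simp only [level, mem_Ioc] at hx ⊢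
      rw [hk]
      constructor <;> linarith
    rw [Function.iterate_succ_apply', hC (i + k) hik _ hmem, hk, add_sub_cancel_right]
    rfl

theorem ExtendedBy.volume_level_inter_eq {C : Column} {T : ℝ → ℝ} (hC : C.ExtendedBy T)
    (hT : Function.Injective T) {A : Set ℝ} (hA : T '' A = A) (i j : Fin C.h) :
    volume (C.level i ∩ A) = volume (C.level j ∩ A) := by
  wlog hij : i ≤ j generalizing i j
  · exact (this j i (le_of_not_ge hij)).symm
  set c := C.a j - C.a i
  have hinv : ∀ k, T^[k] ⁻¹' A = A := fun k => by
    have hfix : T ⁻¹' A = A := by nth_rw 1 [← hA]; exact preimage_image_eq A hT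
    rw [Set.preimage_iterate_eq, Function.iterate_fixed hfix]
  have hshift : ∀ x ∈ C.level i, T^[j - i] x = x + c := fun x hx => by
    have := hC.iterate_apply i (j - i) (by omega) x hx
    simp only [Nat.add_sub_cancel' (Fin.le_iff_val_le_val.1 hij)] at this
    rw [this]; ring
  have hlevel : (· + c) ⁻¹' C.level j = C.level i := by
    simp only [level, preimage_add_const_Ioc, c]
    congr 1 <;> ring
  have hpre : (· + c) ⁻¹' (C.level j ∩ A) = C.level i ∩ A := by
    ext x
    rw [preimage_inter, mem_inter_iff, hlevel, mem_inter_iff]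
    exact and_congr_right fun hx => by rw [mem_preimage, ← hshift x hx, ← mem_preimage, hinv]
  rw [← hpre, measure_preimage_add_right]

theorem ExtendedBy.volume_level_le {C : Column} {T : ℝ → ℝ} (hC : C.ExtendedBy T)
    (hT : Function.Injective T) {A B : Set ℝ} (hA : T '' A = A) (hAB : Disjoint A B)
    (i j : Fin C.h) :
    volume (C.level i) ≤ volume (C.level i \ A) + volume (C.level j \ B) :=
  calc volume (C.level i) ≤ volume (C.level i ∩ A) + volume (C.level i \ A) :=
        measure_le_inter_add_sdiff _ _ _
    _ = volume (C.level i \ A) + volume (C.level j ∩ A) := by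
        rw [hC.volume_level_inter_eq hT hA i j, add_comm]
    _ ≤ volume (C.level i \ A) + volume (C.level j \ B) := by
        gcongr
        exact fun x hx => ⟨hx.1, hAB.notMem_of_mem_left hx.2⟩

end Column

theorem eventually_exists_volume_level_diff_lt {C : ℕ → Column}
    (hmono : Monotone fun n => (C n).support) (hwidth : Tendsto (fun n => (C n).w) atTop (𝓝 0))
    {s : Set ℝ} (hs : MeasurableSet s) (hs0 : volume s ≠ 0)
    (hcover : s ≤ᵐ[volume] ⋃ n, (C n).support) {ε : ℝ≥0∞} (hε : ε ≠ 0) :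
    ∀ᶠ n in atTop, ∃ i, volume ((C n).level i \ s) < ε * volume ((C n).level i) := by
  obtain ⟨x, hxs, hxC, hdens⟩ :=
    Measure.exists_mem_of_measure_ne_zero_of_ae hs0 <| ae_restrict_of_ae <|
      hcover.and (ae_eventually_volume_closedBall_diff_lt hs (ENNReal.half_pos hε).ne')
  obtain ⟨n₀, hn₀⟩ := mem_iUnion.1 (hxC hxs)
  obtain ⟨δ, hδ, hball⟩ := mem_nhdsGT_iff_exists_Ioc_subset.1 (hdens hxs)
  filter_upwards [eventually_ge_atTop n₀, hwidth.eventually (eventually_lt_nhds hδ)]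
    with n hn hwn
  obtain ⟨i, hxi⟩ := mem_iUnion.1 (hmono hn hn₀)
  have hw : 0 < (C n).w := by
    simp only [Column.level, mem_Ioc] at hxi
    linarith
  refine ⟨i, ?_⟩
  calc volume ((C n).level i \ s) ≤ volume (closedBall x (C n).w \ s) :=
        measure_mono (sdiff_subset_sdiff_left (Column.level_subset_closedBall hxi))
    _ < ε / 2 * volume (closedBall x (C n).w) := hball ⟨hw, hwn.le⟩
    _ = ε * volume ((C n).level i) := by
        rw [Real.volume_closedBall, Column.volume_level, ENNReal.ofReal_mul zero_le_two,
          ENNReal.ofReal_ofNat, ← mul_assoc, ENNReal.div_mul_cancel two_ne_zero ofNat_ne_top]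

/-- the invertible measure-preserving transformation defined in the limit
by an extending sequence of columns with widths tending to `0` and supports of full
measure is ergodic: any measurable invariant set has measure `0` or `1`. -/
theorem limit_transformation_ergodic (C : ℕ → Column)
    (hsub : ∀ n, (C n).support ⊆ Set.Icc (0 : ℝ) 1)
    (hext : ∀ n, (C n).support ⊆ (C (n + 1)).support)
    (hwidth : Tendsto (fun n => (C n).w) atTop (nhds 0))
    (hfull : volume (⋃ n, (C n).support) = 1)
    (T : ℝ → ℝ) (hTbij : Function.Bijective T)
    (hT : ∀ (n : ℕ) (i : ℕ) (hi : i + 1 < (C n).h),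
      ∀ x ∈ (C n).level ⟨i, by omega⟩,
        T x = x - (C n).a ⟨i, by omega⟩ + (C n).a ⟨i + 1, hi⟩) :
    ∀ A : Set ℝ, MeasurableSet A → A ⊆ Set.Icc (0 : ℝ) 1 → T '' A = A →
      volume A = 0 ∨ volume A = 1 := by
  intro A hA hAI hTA
  by_contra! hA01
  set B := Icc (0 : ℝ) 1 \ A
  have hAlt : volume A < 1 := ((measure_mono hAI).trans_eq (by simp)).lt_of_ne hA01.2
  have hB0 : volume B ≠ 0 := by
    rw [measure_sdiff hAI hA.nullMeasurableSet hAlt.ne_top, Real.volume_Icc, sub_zero,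
      ENNReal.ofReal_one]
    exact (tsub_pos_of_lt hAlt).ne'
  have hcover : Icc (0 : ℝ) 1 ≤ᵐ[volume] ⋃ n, (C n).support :=
    (ae_eq_of_subset_of_measure_ge (iUnion_subset hsub) (by simp [hfull])
      (MeasurableSet.iUnion fun n => (C n).measurableSet_support).nullMeasurableSet
      (by simp)).symm.le
  have hmono : Monotone fun n => (C n).support := monotone_nat_of_le_succ hext
  have hhalf : (2 : ℝ≥0∞)⁻¹ ≠ 0 := by norm_num
  obtain ⟨n, ⟨i, hi⟩, ⟨j, hj⟩⟩ :=
    ((eventually_exists_volume_level_diff_lt hmono hwidth hA hA01.1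
        (hAI.eventuallyLE.trans hcover) hhalf).and
      (eventually_exists_volume_level_diff_lt hmono hwidth (measurableSet_Icc.diff hA) hB0
        (sdiff_subset.eventuallyLE.trans hcover) hhalf)).exists
  refine lt_irrefl (volume ((C n).level i)) <|
    (Column.ExtendedBy.volume_level_le (hT n) hTbij.injective hTA
      (B := B) disjoint_sdiff_right i j).trans_lt ?_
  calc volume ((C n).level i \ A) + volume ((C n).level j \ B)
      < 2⁻¹ * volume ((C n).level i) + 2⁻¹ * volume ((C n).level j) :=
        ENNReal.add_lt_add hi hj
    _ = volume ((C n).level i) := by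
        rw [Column.volume_level, Column.volume_level, ← add_mul, ENNReal.inv_two_add_inv_two,
          one_mul]
end
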